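/- For any fixed real number r0 > 0, the series I_2(m, r0) tends to 0 as the integer m tends to infinity, where I_2(m, r0) = ∑_{k=1}^∞ (−1)^k · (r0/2)^{2k} · ((2m+3)/(2m+2k+3)) · ∑_{k1+k2=k, k1,k2 ≥ 0} Γ(m+3/2)² / (k1! · k2! · Γ(m+k1+3/2) · Γ(m+k2+3/2)). -/

import Mathlib

/-!
For `x > 0` the functional equation gives `Γ(x + j) ≥ Γ(x) xʲ`, so at `x = m + 3/2` each summand
of the inner sum over `k₁ + k₂ = k` is at most `x⁻ᵏ`; as there are `k + 1 ≤ 2ᵏ` of them, the `k`-th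
term of `I₂(m, r₀)` is bounded by `qᵏ` with `q = r₀² / (2m + 3)`. Hence `|I₂(m, r₀)| ≤ q / (1 - q)`
as soon as `q < 1`, and `q → 0` as `m → ∞`.
-/

open Real Filter Topology

/-- `I₂(m, r₀)` from the paper:
`∑_{k=1}^∞ (−1)^k (r₀/2)^{2k} ((2m+3)/(2m+2k+3)) ·
  ∑_{k₁+k₂=k} Γ(m+3/2)² / (k₁! k₂! Γ(m+k₁+3/2) Γ(m+k₂+3/2))`. -/
noncomputable def I2 (m : ℕ) (r0 : ℝ) : ℝ :=
  ∑' k : ℕ,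
    (-1 : ℝ) ^ (k + 1) * (r0 / 2) ^ (2 * (k + 1)) *
      ((2 * (m : ℝ) + 3) / (2 * (m : ℝ) + 2 * ((k : ℝ) + 1) + 3)) *
      ∑ p ∈ Finset.HasAntidiagonal.antidiagonal (k + 1),
        Real.Gamma ((m : ℝ) + 3 / 2) ^ 2 /
          ((Nat.factorial p.1 : ℝ) * (Nat.factorial p.2 : ℝ) *
            Real.Gamma ((m : ℝ) + (p.1 : ℝ) + 3 / 2) * Real.Gamma ((m : ℝ) + (p.2 : ℝ) + 3 / 2))

open Finset
open scoped Nat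

theorem norm_tsum_le_of_norm_le_pow_succ {E : Type*} [SeminormedAddCommGroup E] {f : ℕ → E}
    {q : ℝ} (hq : q < 1) (hf : ∀ k, ‖f k‖ ≤ q ^ (k + 1)) : ‖∑' k, f k‖ ≤ q / (1 - q) := by
  have hq₀ : 0 ≤ q := by simpa using (norm_nonneg _).trans (hf 0)
  have hgeom : HasSum (fun k : ℕ ↦ q ^ (k + 1)) (q / (1 - q)) := by
    simpa only [pow_succ', div_eq_mul_inv] using (hasSum_geometric_of_lt_one hq₀ hq).mul_left q
  exact tsum_of_norm_bounded hgeom hf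

namespace Real

theorem Gamma_mul_pow_le_Gamma_add_nat {x : ℝ} (hx : 0 < x) (n : ℕ) :
    Gamma x * x ^ n ≤ Gamma (x + n) := by
  induction n with
  | zero => simp
  | succ n ih =>
    have hxn : 0 < x + n := by positivity
    calc Gamma x * x ^ (n + 1) = x * (Gamma x * x ^ n) := by ring
      _ ≤ (x + n) * Gamma (x + n) := by
        gcongr
        · linarith [Nat.cast_nonneg (α := ℝ) n]
      _ = Gamma (x + ↑(n + 1)) := by
        rw [Nat.cast_succ, ← add_assoc, Gamma_add_one hxn.ne']

end Real

noncomputable def gammaAntidiagonalSum (x : ℝ) (n : ℕ) : ℝ :=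
  ∑ p ∈ antidiagonal n, Gamma x ^ 2 / (p.1 ! * p.2 ! * Gamma (x + p.1) * Gamma (x + p.2))

theorem I2_eq_tsum_gammaAntidiagonalSum (m : ℕ) (r0 : ℝ) :
    I2 m r0 = ∑' k : ℕ, (-1 : ℝ) ^ (k + 1) * (r0 / 2) ^ (2 * (k + 1)) *
      ((2 * (m : ℝ) + 3) / (2 * (m : ℝ) + 2 * ((k : ℝ) + 1) + 3)) *
      gammaAntidiagonalSum (m + 3 / 2) (k + 1) := by
  simp only [I2, gammaAntidiagonalSum, add_right_comm _ (3 / 2 : ℝ)]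

theorem gammaAntidiagonalSum_nonneg {x : ℝ} (hx : 0 < x) (n : ℕ) :
    0 ≤ gammaAntidiagonalSum x n :=
  sum_nonneg fun p _ ↦ by
    have : 0 < Gamma (x + p.1) := Gamma_pos_of_pos (by positivity)
    have : 0 < Gamma (x + p.2) := Gamma_pos_of_pos (by positivity)
    positivity

theorem Gamma_sq_div_le_inv_pow {x : ℝ} (hx : 0 < x) {n : ℕ} {p : ℕ × ℕ}
    (hp : p ∈ antidiagonal n) :
    Gamma x ^ 2 / (p.1 ! * p.2 ! * Gamma (x + p.1) * Gamma (x + p.2)) ≤ (x ^ n)⁻¹ := by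
  have hΓ := Gamma_pos_of_pos hx
  have hΓ₁ : 0 < Gamma (x + p.1) := Gamma_pos_of_pos (by positivity)
  have hΓ₂ : 0 < Gamma (x + p.2) := Gamma_pos_of_pos (by positivity)
  have h₁ := Gamma_mul_pow_le_Gamma_add_nat hx p.1
  have h₂ := Gamma_mul_pow_le_Gamma_add_nat hx p.2
  have hfact : (1 : ℝ) ≤ p.1 ! * p.2 ! := by
    exact_mod_cast Nat.mul_pos p.1.factorial_pos p.2.factorial_pos
  have hden : Gamma x ^ 2 * x ^ n ≤ p.1 ! * p.2 ! * Gamma (x + p.1) * Gamma (x + p.2) :=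
    calc Gamma x ^ 2 * x ^ n = (Gamma x * x ^ p.1) * (Gamma x * x ^ p.2) := by
          rw [← mem_antidiagonal.mp hp, pow_add]; ring
      _ ≤ Gamma (x + p.1) * Gamma (x + p.2) := by gcongr
      _ ≤ p.1 ! * p.2 ! * Gamma (x + p.1) * Gamma (x + p.2) := by
          rw [mul_assoc (_ * _)]
          exact le_mul_of_one_le_left (by positivity) hfact
  calc _ ≤ Gamma x ^ 2 / (Gamma x ^ 2 * x ^ n) := by gcongr
    _ = (x ^ n)⁻¹ := by field_simp

theorem gammaAntidiagonalSum_le {x : ℝ} (hx : 0 < x) (n : ℕ) :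
    gammaAntidiagonalSum x n ≤ (2 / x) ^ n :=
  calc gammaAntidiagonalSum x n ≤ #(antidiagonal n) • (x ^ n)⁻¹ :=
        sum_le_card_nsmul _ _ _ fun _ hp ↦ Gamma_sq_div_le_inv_pow hx hp
    _ ≤ 2 ^ n * (x ^ n)⁻¹ := by
        rw [Nat.card_antidiagonal, nsmul_eq_mul]
        gcongr
        exact_mod_cast n.lt_two_pow_self
    _ = (2 / x) ^ n := by rw [div_pow, div_eq_mul_inv]

theorem abs_I2_term_le (m k : ℕ) (r0 : ℝ) :
    |(-1 : ℝ) ^ (k + 1) * (r0 / 2) ^ (2 * (k + 1)) *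
      ((2 * (m : ℝ) + 3) / (2 * (m : ℝ) + 2 * ((k : ℝ) + 1) + 3)) *
      gammaAntidiagonalSum (m + 3 / 2) (k + 1)| ≤ (r0 ^ 2 / (2 * m + 3)) ^ (k + 1) := by
  have hx : (0 : ℝ) < m + 3 / 2 := by positivity
  have hratio : (2 * (m : ℝ) + 3) / (2 * (m : ℝ) + 2 * ((k : ℝ) + 1) + 3) ≤ 1 :=
    div_le_one_of_le₀ (by linarith [k.cast_nonneg (α := ℝ)]) (by positivity)
  rw [pow_mul, abs_mul, abs_mul, abs_mul, abs_pow, abs_neg, abs_one, one_pow, one_mul,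
    abs_of_nonneg (by positivity), abs_of_nonneg (by positivity),
    abs_of_nonneg (gammaAntidiagonalSum_nonneg hx _)]
  calc _ ≤ ((r0 / 2) ^ 2) ^ (k + 1) * 1 * (2 / (m + 3 / 2)) ^ (k + 1) := by
        gcongr
        · exact gammaAntidiagonalSum_nonneg hx _
        · exact gammaAntidiagonalSum_le hx _
    _ = (r0 ^ 2 / (2 * m + 3)) ^ (k + 1) := by
        rw [mul_one, ← mul_pow]
        congr 1
        field_simp

theorem I2_tendsto_zero_general (r0 : ℝ) :
    Tendsto (fun m : ℕ => I2 m r0) atTop (𝓝 0) := by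
  set q : ℕ → ℝ := fun m ↦ r0 ^ 2 / (2 * m + 3)
  have hq : Tendsto q atTop (𝓝 0) :=
    tendsto_const_nhds.div_atTop <| tendsto_atTop_add_const_right _ _ <|
      tendsto_natCast_atTop_atTop.const_mul_atTop two_pos
  have hbound : Tendsto (fun m ↦ q m / (1 - q m)) atTop (𝓝 0) := by
    rw [show (0 : ℝ) = 0 / (1 - 0) by simp]
    exact hq.div (tendsto_const_nhds.sub hq) (by norm_num)
  refine squeeze_zero_norm' ?_ hbound
  filter_upwards [hq.eventually_lt_const one_pos] with m hq1
  rw [I2_eq_tsum_gammaAntidiagonalSum]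
  exact norm_tsum_le_of_norm_le_pow_succ hq1 fun k ↦ abs_I2_term_le m k r0

theorem I2_tendsto_zero (r0 : ℝ) (hr0 : 0 < r0) :
    Tendsto (fun m : ℕ => I2 m r0) atTop (𝓝 0) :=
  I2_tendsto_zero_general r0
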